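/- arXiv:math/0701837 — 2 statements merged into one kernel-verified Lean document; each statement's English description precedes it below -/
import Mathlib

section
/- The double bracket on the free algebra ℂ⟨x,y⟩ determined by ⟪x,x⟫ = 0, ⟪y,y⟫ = 0, ⟪x,y⟫ = x⊗x, and ⟪y,x⟫ = −x⊗x, extended so as to be a derivation in its second argument for the outer bimodule structure and satisfying ⟪a,b⟫ = −⟪b,a⟫^op, satisfies the double Jacobi identity: for all a,b,c in ℂ⟨x,y⟩, ⟪a,⟪b,c⟫'⟫ ⊗ ⟪b,c⟫'' + σ-cyclic terms (i.e., Σ over cyclic permutations with the appropriate tensor factor permutations) vanish in A⊗A⊗A. -/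
/-!
For any double bracket the triple bracket
`⟪a,b,c⟫ = ⟪a,⟪b,c⟫'⟫ ⊗ ⟪b,c⟫'' + τ ⟪b,⟪c,a⟫'⟫ ⊗ ⟪c,a⟫'' + τ² ⟪c,⟪a,b⟫'⟫ ⊗ ⟪a,b⟫''`
is a derivation in `c` for the outer bimodule structure on `A⊗A⊗A`: expanding `⟪b, cd⟫` in the
first summand and `⟪cd, a⟫` in the second, each produces the mixed term
`⟪a,c⟫' ⊗ ⟪a,c⟫''⟪b,d⟫' ⊗ ⟪b,d⟫''`, once with each sign by antisymmetry. It is also cyclically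
invariant, `⟪a,b,c⟫ = τ ⟪b,c,a⟫`, since `τ³ = 1`. Hence it vanishes once it vanishes on triples of
generators. On the generators `x₀ = x`, `x₁ = y` the bracket is `⟪xᵢ,xⱼ⟫ = εᵢⱼ x⊗x` with `ε`
antisymmetric, so `⟪xᵢ,xⱼ,xₖ⟫ = (εⱼₖεᵢ₀ + εₖᵢεⱼ₀ + εᵢⱼεₖ₀) x⊗x⊗x`; this coefficient is
alternating in `(i, j, k)`, hence zero when the indices range over two values.
-/

open TensorProduct

noncomputable section

abbrev A2 := FreeAlgebra ℂ (Fin 2)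

def Xg : A2 := FreeAlgebra.ι ℂ 0
def Yg : A2 := FreeAlgebra.ι ℂ 1

/-- Apply `B a` to the first tensor factor: `u ⊗ v ↦ ⟪a,u⟫ ⊗ v ∈ A⊗A⊗A`. -/
def Tfst (B : A2 →ₗ[ℂ] A2 →ₗ[ℂ] A2 ⊗[ℂ] A2) (a : A2) :
    A2 ⊗[ℂ] A2 →ₗ[ℂ] A2 ⊗[ℂ] (A2 ⊗[ℂ] A2) :=
  (TensorProduct.assoc ℂ A2 A2 A2).toLinearMap ∘ₗ TensorProduct.map (B a) LinearMap.id

/-- The cyclic permutation `τ_{(123)} : u⊗v⊗w ↦ w⊗u⊗v`. -/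
def cyc : A2 ⊗[ℂ] (A2 ⊗[ℂ] A2) →ₗ[ℂ] A2 ⊗[ℂ] (A2 ⊗[ℂ] A2) :=
  (TensorProduct.comm ℂ (A2 ⊗[ℂ] A2) A2).toLinearMap ∘ₗ
    (TensorProduct.assoc ℂ A2 A2 A2).symm.toLinearMap

lemma LinearMap.eq_zero_of_leibniz_of_adjoin_eq_top {R A M : Type*} [CommRing R] [Ring A]
    [Algebra R A] [Ring M] [Algebra R M] (f : A →ₗ[R] M) (l r : A →ₐ[R] M)
    (hf : ∀ a b, f (a * b) = l a * f b + f a * r b) {s : Set A} (hs : Algebra.adjoin R s = ⊤)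
    (h : ∀ x ∈ s, f x = 0) (x : A) : f x = 0 := by
  have hone : f 1 = 0 := by simpa using hf 1 1
  induction (hs ▸ Algebra.mem_top : x ∈ Algebra.adjoin R s) using Algebra.adjoin_induction with
  | mem x hx => exact h x hx
  | algebraMap r => rw [Algebra.algebraMap_eq_smul_one, map_smul, hone, smul_zero]
  | add x y _ _ hx hy => rw [map_add, hx, hy, add_zero]
  | mul x y _ _ hx hy => rw [hf, hx, hy, mul_zero, zero_mul, add_zero]

namespace DoubleBracket

variable {R A : Type*} [CommRing R] [Ring A] [Algebra R A]

def onFst (D : A →ₗ[R] A ⊗[R] A) : A ⊗[R] A →ₗ[R] A ⊗[R] (A ⊗[R] A) :=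
  (TensorProduct.assoc R A A A).toLinearMap ∘ₗ D.rTensor A

variable (R A) in
def cycle : A ⊗[R] (A ⊗[R] A) →ₗ[R] A ⊗[R] (A ⊗[R] A) :=
  (TensorProduct.comm R (A ⊗[R] A) A).toLinearMap ∘ₗ
    (TensorProduct.assoc R A A A).symm.toLinearMap

@[simp] lemma onFst_tmul (D : A →ₗ[R] A ⊗[R] A) (u v : A) :
    onFst D (u ⊗ₜ v) = TensorProduct.assoc R A A A (D u ⊗ₜ v) := rfl

@[simp] lemma cycle_tmul (u v w : A) : cycle R A (u ⊗ₜ (v ⊗ₜ w)) = w ⊗ₜ (u ⊗ₜ v) := rfl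

@[simp] lemma cycle_assoc (t : (A ⊗[R] A) ⊗[R] A) :
    cycle R A (TensorProduct.assoc R A A A t) = TensorProduct.comm R _ A t := by
  simp [cycle]

lemma cycle_mul (s t : A ⊗[R] (A ⊗[R] A)) : cycle R A (s * t) = cycle R A s * cycle R A t :=
  map_mul ((Algebra.TensorProduct.comm R (A ⊗[R] A) A).toAlgHom.comp
    (Algebra.TensorProduct.assoc R R R A A A).symm.toAlgHom) s t

lemma cycle_cycle_cycle (t : A ⊗[R] (A ⊗[R] A)) : cycle R A (cycle R A (cycle R A t)) = t := by
  induction t using TensorProduct.induction_on with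
  | zero => simp
  | add t₁ t₂ h₁ h₂ => simp only [map_add, h₁, h₂]
  | tmul u p =>
    induction p using TensorProduct.induction_on with
    | zero => simp
    | add p₁ p₂ h₁ h₂ => simp only [tmul_add, map_add, h₁, h₂]
    | tmul v w => rfl

lemma assoc_symm_mul (s t : A ⊗[R] (A ⊗[R] A)) :
    (TensorProduct.assoc R A A A).symm (s * t) =
      (TensorProduct.assoc R A A A).symm s * (TensorProduct.assoc R A A A).symm t :=
  map_mul (Algebra.TensorProduct.assoc R R R A A A).symm s t

lemma comm_mul (s t : A ⊗[R] A) :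
    TensorProduct.comm R A A (s * t) = TensorProduct.comm R A A s * TensorProduct.comm R A A t :=
  map_mul (Algebra.TensorProduct.comm R A A) s t

lemma onFst_add (D₁ D₂ : A →ₗ[R] A ⊗[R] A) : onFst (D₁ + D₂) = onFst D₁ + onFst D₂ := by
  rw [onFst, onFst, onFst, LinearMap.rTensor_add, LinearMap.comp_add]

lemma onFst_smul (r : R) (D : A →ₗ[R] A ⊗[R] A) : onFst (r • D) = r • onFst D := by
  rw [onFst, onFst, LinearMap.rTensor_smul, LinearMap.comp_smul]

variable (D : A →ₗ[R] A ⊗[R] A)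

lemma onFst_mul_one_tmul (t : A ⊗[R] A) (d : A) :
    onFst D (t * (1 ⊗ₜ d)) = onFst D t * (1 ⊗ₜ (1 ⊗ₜ d)) := by
  induction t using TensorProduct.induction_on with
  | zero => simp
  | add t₁ t₂ h₁ h₂ => simp only [add_mul, map_add, h₁, h₂]
  | tmul u v =>
    apply (TensorProduct.assoc R A A A).symm.injective
    simp [assoc_symm_mul, Algebra.TensorProduct.tmul_mul_tmul, ← Algebra.TensorProduct.one_def]

lemma onFst_one_tmul_mul (c : A) (t : A ⊗[R] A) :
    onFst D ((1 ⊗ₜ c) * t) = (1 ⊗ₜ (1 ⊗ₜ c)) * onFst D t := by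
  induction t using TensorProduct.induction_on with
  | zero => simp
  | add t₁ t₂ h₁ h₂ => simp only [mul_add, map_add, h₁, h₂]
  | tmul u v =>
    apply (TensorProduct.assoc R A A A).symm.injective
    simp [assoc_symm_mul, Algebra.TensorProduct.tmul_mul_tmul, ← Algebra.TensorProduct.one_def]

variable {D}

-- `assoc (e ⊗ₜ 1) * (1 ⊗ₜ t) = e' ⊗ e''t' ⊗ t''`
lemma onFst_tmul_one_mul (hD : ∀ b c, D (b * c) = (b ⊗ₜ 1) * D c + D b * (1 ⊗ₜ c))
    (c : A) (t : A ⊗[R] A) :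
    onFst D ((c ⊗ₜ 1) * t) =
      (c ⊗ₜ (1 ⊗ₜ 1)) * onFst D t + TensorProduct.assoc R A A A (D c ⊗ₜ 1) * (1 ⊗ₜ t) := by
  induction t using TensorProduct.induction_on with
  | zero => simp
  | add t₁ t₂ h₁ h₂ => simp only [mul_add, map_add, tmul_add, h₁, h₂]; abel
  | tmul u v =>
    apply (TensorProduct.assoc R A A A).symm.injective
    simp [assoc_symm_mul, Algebra.TensorProduct.tmul_mul_tmul, hD, add_tmul]

lemma cycle_onFst_mul_tmul_one (hD : ∀ b c, D (b * c) = (b ⊗ₜ 1) * D c + D b * (1 ⊗ₜ c))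
    (t : A ⊗[R] A) (d : A) :
    cycle R A (onFst D (t * (d ⊗ₜ 1))) =
      TensorProduct.assoc R A A A (TensorProduct.comm R A A t ⊗ₜ 1) * (1 ⊗ₜ D d) +
        cycle R A (onFst D t) * (1 ⊗ₜ (1 ⊗ₜ d)) := by
  induction t using TensorProduct.induction_on with
  | zero => simp
  | add t₁ t₂ h₁ h₂ => simp only [add_mul, map_add, add_tmul, h₁, h₂]; abel
  | tmul u v =>
    simp [Algebra.TensorProduct.tmul_mul_tmul, hD, tmul_add]

def tripleBracket (B : A →ₗ[R] A →ₗ[R] A ⊗[R] A) (a b : A) : A →ₗ[R] A ⊗[R] (A ⊗[R] A) where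
  toFun c := onFst (B a) (B b c) + cycle R A (onFst (B b) (B c a)) +
    cycle R A (cycle R A (onFst (B c) (B a b)))
  map_add' c c' := by simp only [map_add, LinearMap.add_apply, onFst_add]; abel
  map_smul' r c := by simp only [map_smul, LinearMap.smul_apply, onFst_smul, smul_add]; rfl

lemma tripleBracket_apply (B : A →ₗ[R] A →ₗ[R] A ⊗[R] A) (a b c : A) :
    tripleBracket B a b c = onFst (B a) (B b c) + cycle R A (onFst (B b) (B c a)) +
      cycle R A (cycle R A (onFst (B c) (B a b))) := rfl

lemma tripleBracket_eq_cycle (B : A →ₗ[R] A →ₗ[R] A ⊗[R] A) (a b c : A) :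
    tripleBracket B a b c = cycle R A (tripleBracket B b c a) := by
  simp only [tripleBracket_apply, map_add, cycle_cycle_cycle]
  abel

lemma tripleBracket_of_eq_smul_tmul {B : A →ₗ[R] A →ₗ[R] A ⊗[R] A} {ι : Type*} (x : ι → A)
    (i₀ : ι) (ε : ι → ι → R) (hx : ∀ i j, B (x i) (x j) = ε i j • (x i₀ ⊗ₜ x i₀)) (i j k : ι) :
    tripleBracket B (x i) (x j) (x k) =
      (ε j k * ε i i₀ + ε k i * ε j i₀ + ε i j * ε k i₀) • (x i₀ ⊗ₜ (x i₀ ⊗ₜ x i₀)) := by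
  simp only [tripleBracket_apply, hx, map_smul, onFst_tmul, ← smul_tmul', assoc_tmul, cycle_tmul]
  module

structure IsDoubleBracket (B : A →ₗ[R] A →ₗ[R] A ⊗[R] A) : Prop where
  leibniz : ∀ a b c, B a (b * c) = (b ⊗ₜ 1) * B a c + B a b * (1 ⊗ₜ c)
  antisymm : ∀ a b, B a b = -TensorProduct.comm R A A (B b a)

namespace IsDoubleBracket

variable {B : A →ₗ[R] A →ₗ[R] A ⊗[R] A} (hB : IsDoubleBracket B)
include hB

lemma comm_apply (a b : A) : TensorProduct.comm R A A (B a b) = -B b a := by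
  rw [hB.antisymm b a, neg_neg]

lemma leibniz_left (c d u : A) :
    B (c * d) u = (1 ⊗ₜ c) * B d u + B c u * (d ⊗ₜ 1) := by
  rw [hB.antisymm, hB.leibniz, map_add, comm_mul, comm_mul, hB.comm_apply, hB.comm_apply]
  simp [add_comm]

lemma onFst_mul (c d : A) (t : A ⊗[R] A) :
    onFst (B (c * d)) t = (1 ⊗ₜ (c ⊗ₜ 1)) * onFst (B d) t + onFst (B c) t * (d ⊗ₜ (1 ⊗ₜ 1)) := by
  induction t using TensorProduct.induction_on with
  | zero => simp
  | add t₁ t₂ h₁ h₂ => simp only [mul_add, add_mul, map_add, h₁, h₂]; abel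
  | tmul u v =>
    apply (TensorProduct.assoc R A A A).symm.injective
    simp [assoc_symm_mul, Algebra.TensorProduct.tmul_mul_tmul, hB.leibniz_left, add_tmul]

lemma tripleBracket_mul (a b c d : A) :
    tripleBracket B a b (c * d) =
      (c ⊗ₜ (1 ⊗ₜ 1)) * tripleBracket B a b d + tripleBracket B a b c * (1 ⊗ₜ (1 ⊗ₜ d)) := by
  have h₁ : onFst (B a) (B b (c * d)) = (c ⊗ₜ (1 ⊗ₜ 1)) * onFst (B a) (B b d) +
      TensorProduct.assoc R A A A (B a c ⊗ₜ 1) * (1 ⊗ₜ B b d) +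
      onFst (B a) (B b c) * (1 ⊗ₜ (1 ⊗ₜ d)) := by
    rw [hB.leibniz, map_add, onFst_tmul_one_mul (hB.leibniz a), onFst_mul_one_tmul]
  have h₂ : cycle R A (onFst (B b) (B (c * d) a)) =
      (c ⊗ₜ (1 ⊗ₜ 1)) * cycle R A (onFst (B b) (B d a)) +
      TensorProduct.assoc R A A A (TensorProduct.comm R A A (B c a) ⊗ₜ 1) * (1 ⊗ₜ B b d) +
      cycle R A (onFst (B b) (B c a)) * (1 ⊗ₜ (1 ⊗ₜ d)) := by
    rw [hB.leibniz_left, map_add, map_add, onFst_one_tmul_mul,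
      cycle_onFst_mul_tmul_one (hB.leibniz b), cycle_mul, cycle_tmul]
    abel
  have cross : TensorProduct.assoc R A A A (TensorProduct.comm R A A (B c a) ⊗ₜ 1) * (1 ⊗ₜ B b d) =
      -(TensorProduct.assoc R A A A (B a c ⊗ₜ 1) * (1 ⊗ₜ B b d)) := by
    rw [hB.comm_apply, neg_tmul, map_neg]
    -- `rw`/`simp` with `neg_mul` fail here: this `-` is `TensorProduct.neg`, not the ring's
    exact neg_mul (α := A ⊗[R] (A ⊗[R] A)) _ _
  have h₃ : cycle R A (cycle R A (onFst (B (c * d)) (B a b))) =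
      (c ⊗ₜ (1 ⊗ₜ 1)) * cycle R A (cycle R A (onFst (B d) (B a b))) +
      cycle R A (cycle R A (onFst (B c) (B a b))) * (1 ⊗ₜ (1 ⊗ₜ d)) := by
    simp only [hB.onFst_mul, map_add, cycle_mul, cycle_tmul]
  simp only [tripleBracket_apply, h₁, h₂, h₃, cross, mul_add, add_mul]
  abel

lemma tripleBracket_eq_zero {s : Set A} (hs : Algebra.adjoin R s = ⊤)
    (h : ∀ a ∈ s, ∀ b ∈ s, ∀ c ∈ s, tripleBracket B a b c = 0) (a b c : A) :
    tripleBracket B a b c = 0 := by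
  have of_gen (a b : A) (hab : ∀ c ∈ s, tripleBracket B a b c = 0) (c : A) :
      tripleBracket B a b c = 0 :=
    LinearMap.eq_zero_of_leibniz_of_adjoin_eq_top _ Algebra.TensorProduct.includeLeft
      (Algebra.TensorProduct.includeRight.comp Algebra.TensorProduct.includeRight)
      (hB.tripleBracket_mul a b) hs hab c
  have rotate (a b c : A) (hcab : tripleBracket B c a b = 0) : tripleBracket B a b c = 0 := by
    rw [tripleBracket_eq_cycle, tripleBracket_eq_cycle, hcab, map_zero, map_zero]
  have h₂ (a : A) (ha : a ∈ s) (b c : A) : tripleBracket B a b c = 0 :=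
    of_gen a b (fun c hc ↦ rotate a b c (of_gen c a (fun b hb ↦ h c hc a ha b hb) b)) c
  exact of_gen a b (fun c hc ↦ rotate a b c (h₂ c hc a b)) c

end IsDoubleBracket

end DoubleBracket

/-- The double bracket on `ℂ⟨x,y⟩` with `⟪x,y⟫ = x⊗x`, `⟪y,x⟫ = −x⊗x`,
`⟪x,x⟫ = ⟪y,y⟫ = 0` satisfies the double Jacobi identity. -/
theorem stmt_2 (B : A2 →ₗ[ℂ] A2 →ₗ[ℂ] A2 ⊗[ℂ] A2)
    (hder : ∀ a b c : A2, B a (b * c)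
      = (b ⊗ₜ[ℂ] (1 : A2)) * B a c + B a b * ((1 : A2) ⊗ₜ[ℂ] c))
    (hskew : ∀ a b : A2, B a b = - (TensorProduct.comm ℂ A2 A2) (B b a))
    (hxx : B Xg Xg = 0) (hyy : B Yg Yg = 0)
    (hxy : B Xg Yg = Xg ⊗ₜ[ℂ] Xg)
    (hyx : B Yg Xg = - (Xg ⊗ₜ[ℂ] Xg)) :
    ∀ a b c : A2,
      Tfst B a (B b c) + cyc (Tfst B b (B c a)) + cyc (cyc (Tfst B c (B a b))) = 0 := by
  have hB : DoubleBracket.IsDoubleBracket B := ⟨hder, hskew⟩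
  have hgen (i j : Fin 2) :
      B (FreeAlgebra.ι ℂ i) (FreeAlgebra.ι ℂ j) = !![0, 1; -1, 0] i j • (Xg ⊗ₜ Xg) := by
    fin_cases i <;> fin_cases j
    · simpa [Xg, Yg] using hxx
    · simpa [Xg, Yg] using hxy
    · simpa [Xg, Yg] using hyx
    · simpa [Xg, Yg] using hyy
  intro a b c
  change DoubleBracket.tripleBracket B a b c = 0
  refine hB.tripleBracket_eq_zero (FreeAlgebra.adjoin_range_ι ℂ (Fin 2)) ?_ a b c
  rintro _ ⟨i, rfl⟩ _ ⟨j, rfl⟩ _ ⟨k, rfl⟩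
  rw [DoubleBracket.tripleBracket_of_eq_smul_tmul _ 0 _ hgen]
  fin_cases i <;> fin_cases j <;> fin_cases k <;> simp

end
end

section
/- In the free algebra ℂ⟨x,y⟩, the centralizer of x is ℂ[x]: if g ∈ ℂ⟨x,y⟩ satisfies gx = xg, then g is a polynomial in x alone. -/
/-!
Transport to the monoid algebra of the free monoid and look at coefficients. If `g` commutes
with `x`, it commutes with `xⁿ`, and comparing the coefficients of `xⁿ g = g xⁿ` at the word
`xⁿ u` gives `g_u = 0` unless `xⁿ u` ends in `xⁿ`. Taking `n = |u|` this forces `u = xⁿ`, so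
`g` is supported on powers of `x`.
-/

theorem FreeMonoid.toList_of_pow {α : Type*} (a : α) (n : ℕ) :
    (of a ^ n).toList = List.replicate n a := by
  induction n with
  | zero => rfl
  | succ n ih => rw [pow_succ, toList_mul, ih, toList_of, List.replicate_succ']

theorem FreeMonoid.eq_pow_length_of_mul_pow_eq_pow_mul {α : Type*} {a : α} {u v : FreeMonoid α}
    (h : v * of a ^ u.length = of a ^ u.length * u) : u = of a ^ u.length := by
  have hl := congrArg toList h
  rw [toList_mul, toList_mul, toList_of_pow] at hl
  have hlen : v.toList.length = (List.replicate u.length a).length := by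
    have := congrArg List.length hl
    simp only [List.length_append, List.length_replicate] at this ⊢
    exact Nat.add_right_cancel (this.trans (Nat.add_comm _ _))
  apply toList.injective
  rw [toList_of_pow]
  exact (List.append_inj hl hlen).2.symm

namespace MonoidAlgebra

theorem coeff_eq_zero_of_commute_single {R M : Type*} [Semiring R] [Mul M] [IsLeftCancelMul M]
    {f : R[M]} {m : M} (hf : Commute f (single m 1)) {u : M} (hu : ∀ v, v * m ≠ m * u) :
    f.coeff u = 0 :=
  calc f.coeff u = (single m 1 * f).coeff (m * u) := by
        rw [coeff_single_mul_eq_mul_coeff u (fun _ _ ↦ mul_right_inj m), one_mul]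
    _ = (f * single m 1).coeff (m * u) := by rw [hf.eq]
    _ = 0 := coeff_mul_single_of_forall_mul_ne _ _ hu

theorem support_subset_range_pow_of_commute_single_of {R α : Type*} [Semiring R] {a : α}
    {f : R[FreeMonoid α]} (hf : Commute f (single (FreeMonoid.of a) 1)) :
    (f.coeff.support : Set (FreeMonoid α)) ⊆ Set.range (FreeMonoid.of a ^ ·) := by
  intro u hu
  by_contra hne
  refine Finsupp.mem_support_iff.mp hu (coeff_eq_zero_of_commute_single (m := .of a ^ u.length)
    (by simpa using hf.pow_right u.length) fun v hv ↦ hne ⟨u.length, ?_⟩)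
  exact (FreeMonoid.eq_pow_length_of_mul_pow_eq_pow_mul hv).symm

theorem mem_adjoin_single_of_commute_single {R α : Type*} [CommSemiring R] {a : α}
    {f : R[FreeMonoid α]} (hf : Commute f (single (FreeMonoid.of a) 1)) :
    f ∈ Algebra.adjoin R {single (FreeMonoid.of a) 1} := by
  refine Algebra.adjoin_le ?_ (mem_adjoin_support f)
  rintro _ ⟨u, hu, rfl⟩
  obtain ⟨n, rfl⟩ := support_subset_range_pow_of_commute_single_of hf hu
  simpa using pow_mem (Algebra.self_mem_adjoin_singleton R (single (FreeMonoid.of a) (1 : R))) n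

end MonoidAlgebra

theorem FreeAlgebra.mem_adjoin_ι_of_commute {R X : Type*} [CommSemiring R] {g : FreeAlgebra R X}
    {x : X} (h : Commute g (ι R x)) : g ∈ Algebra.adjoin R {ι R x} := by
  set e := FreeAlgebra.equivMonoidAlgebraFreeMonoid (R := R) (X := X)
  have he : e (ι R x) = MonoidAlgebra.single (FreeMonoid.of x) 1 := by
    simp [e, equivMonoidAlgebraFreeMonoid]
  have hc : Commute (e g) (MonoidAlgebra.single (FreeMonoid.of x) 1) := he ▸ h.map e
  have hmem := MonoidAlgebra.mem_adjoin_single_of_commute_single hc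
  rw [← he, ← AlgEquiv.coe_toAlgHom, ← AlgHom.map_adjoin_singleton] at hmem
  obtain ⟨g', hg', hgg'⟩ := Subalgebra.mem_map.mp hmem
  exact e.injective hgg' ▸ hg'

/-- In the free algebra `ℂ⟨x,y⟩`, the centralizer of `x` is `ℂ[x]`. -/
theorem stmt_7 (g : FreeAlgebra ℂ (Fin 2))
    (h : g * FreeAlgebra.ι ℂ 0 = FreeAlgebra.ι ℂ 0 * g) :
    g ∈ Algebra.adjoin ℂ ({FreeAlgebra.ι ℂ 0} : Set (FreeAlgebra ℂ (Fin 2))) :=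
  FreeAlgebra.mem_adjoin_ι_of_commute h
end
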